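/- Let Q'(x,y,z) = Q⁰(x,y,z) - (1/8){N(φ²z, φ²y, φ²x) + 2N(φz, φy, ξ)η(x)}, where Q⁰(x,y,z) = ½{F(x,φy,z) + η(z)F(x,φy,ξ) - 2η(y)F(x,φz,ξ)} and N is the Nijenhuis-type tensor built from F. Then Q' also satisfies the natural-connection conditions Q'(x,y,φz) - Q'(x,φy,z) = F(x,y,z) and Q'(x,y,z) = -Q'(x,z,y). -/

import Mathlib

/-!
The φB-potential `Q⁰` is already natural, and the two natural-connection conditions are
affine in `Q`, so it suffices that the correction term `P` (the bracket multiplied by `1/8`)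
is skew in its last two arguments and satisfies `P(x,y,φz) = P(x,φy,z)`. Skewness holds
because `N` is skew in its first two arguments. The second identity reduces, via
`φ³ = -φ`, to `N(φu, φ²v, w) = N(φ²u, φv, w)`, which is four instances of the defining
identity of `F` with a horizontal middle argument.
-/

namespace AlmostContact

variable {V : Type*} [AddCommGroup V] [Module ℝ V]
  (φ : V →ₗ[ℝ] V) (ξ : V) (η : V →ₗ[ℝ] ℝ) (F : V →ₗ[ℝ] V →ₗ[ℝ] V →ₗ[ℝ] ℝ)

def IsNaturalPotential (Q : V → V → V → ℝ) : Prop :=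
  (∀ x y z : V, Q x y (φ z) - Q x (φ y) z = F x y z) ∧ (∀ x y z : V, Q x y z = - Q x z y)

noncomputable def phiBPotential (x y z : V) : ℝ :=
  (1 / 2) * (F x (φ y) z + η z * F x (φ y) ξ - 2 * η y * F x (φ z) ξ)

def nijenhuisForm (x y z : V) : ℝ :=
  F (φ x) y z - F x y (φ z) + F x (φ y) ξ * η z - F (φ y) x z + F y x (φ z) - F y (φ x) ξ * η z

def canonicalCorrection (x y z : V) : ℝ :=
  nijenhuisForm φ ξ η F (φ (φ z)) (φ (φ y)) (φ (φ x))
    + 2 * nijenhuisForm φ ξ η F (φ z) (φ y) ξ * η x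

variable {φ ξ η F}

theorem phi_phi_phi (hφ2 : ∀ x : V, φ (φ x) = -x + η x • ξ) (hηφ : ∀ x : V, η (φ x) = 0)
    (x : V) : φ (φ (φ x)) = -φ x := by
  rw [hφ2, hηφ, zero_smul, add_zero]

theorem F_xi_xi (hφξ : φ ξ = 0) (hηξ : η ξ = 1)
    (hF2 : ∀ x y z : V, F x y z = F x (φ y) (φ z) + η y * F x ξ z + η z * F x y ξ) (x : V) :
    F x ξ ξ = 0 := by
  have h := hF2 x ξ ξ
  simp only [hφξ, hηξ, map_zero, one_mul, zero_add] at h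
  linarith

theorem F_phi_add_F_phi (hφ2 : ∀ x : V, φ (φ x) = -x + η x • ξ) (hηφ : ∀ x : V, η (φ x) = 0)
    (hF2 : ∀ x y z : V, F x y z = F x (φ y) (φ z) + η y * F x ξ z + η z * F x y ξ) (x y z : V) :
    F x (φ y) z + F x y (φ z) = η y * F x ξ (φ z) + η z * F x (φ y) ξ := by
  have h := hF2 x (φ y) z
  simp only [hφ2, hηφ, map_add, map_neg, map_smul, LinearMap.add_apply, LinearMap.neg_apply,
    LinearMap.smul_apply, smul_eq_mul, zero_mul, add_zero] at h
  linarith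

theorem phiBPotential_isNaturalPotential (hφξ : φ ξ = 0)
    (hφ2 : ∀ x : V, φ (φ x) = -x + η x • ξ) (hηφ : ∀ x : V, η (φ x) = 0) (hηξ : η ξ = 1)
    (hF1 : ∀ x y z : V, F x y z = F x z y)
    (hF2 : ∀ x y z : V, F x y z = F x (φ y) (φ z) + η y * F x ξ z + η z * F x y ξ) :
    IsNaturalPotential φ F (phiBPotential φ ξ η F) := by
  constructor
  · intro x y z
    have hξξ := F_xi_xi hφξ hηξ hF2 x
    simp only [phiBPotential, hφ2, hηφ, map_add, map_neg, map_smul, LinearMap.add_apply,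
      LinearMap.neg_apply, LinearMap.smul_apply, smul_eq_mul, hξξ]
    linear_combination (-1 / 2 : ℝ) * hF2 x y z + η y * hF1 x z ξ
  · intro x y z
    simp only [phiBPotential]
    linear_combination (1 / 2 : ℝ) * F_phi_add_F_phi hφ2 hηφ hF2 x y z
      + (1 / 2 : ℝ) * hF1 x (φ z) y + (1 / 2 : ℝ) * η y * hF1 x ξ (φ z)

theorem nijenhuisForm_swap (x y z : V) :
    nijenhuisForm φ ξ η F x y z = -nijenhuisForm φ ξ η F y x z := by
  simp only [nijenhuisForm]
  ring

theorem nijenhuisForm_neg_left (x y z : V) :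
    nijenhuisForm φ ξ η F (-x) y z = -nijenhuisForm φ ξ η F x y z := by
  simp only [nijenhuisForm, map_neg, LinearMap.neg_apply]
  ring

theorem nijenhuisForm_neg_middle (x y z : V) :
    nijenhuisForm φ ξ η F x (-y) z = -nijenhuisForm φ ξ η F x y z := by
  rw [nijenhuisForm_swap, nijenhuisForm_neg_left, nijenhuisForm_swap y, neg_neg]

theorem nijenhuisForm_move_phi (hφ2 : ∀ x : V, φ (φ x) = -x + η x • ξ)
    (hηφ : ∀ x : V, η (φ x) = 0)
    (hF2 : ∀ x y z : V, F x y z = F x (φ y) (φ z) + η y * F x ξ z + η z * F x y ξ) (u v w : V) :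
    nijenhuisForm φ ξ η F (φ u) (φ (φ v)) w = nijenhuisForm φ ξ η F (φ (φ u)) (φ v) w := by
  have h3 := phi_phi_phi hφ2 hηφ
  have e1 := hF2 (φ u) (φ v) w
  have e2 := hF2 (φ (φ u)) (φ (φ v)) w
  have e3 := hF2 (φ v) (φ u) w
  have e4 := hF2 (φ (φ v)) (φ (φ u)) w
  simp only [h3, hηφ, map_neg, LinearMap.neg_apply, zero_mul, add_zero] at e1 e2 e3 e4
  simp only [nijenhuisForm, h3, map_neg, LinearMap.neg_apply]
  linear_combination e1 + e2 + e3 + e4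

theorem canonicalCorrection_swap (x y z : V) :
    canonicalCorrection φ ξ η F x y z = -canonicalCorrection φ ξ η F x z y := by
  simp only [canonicalCorrection, nijenhuisForm_swap (φ (φ z)), nijenhuisForm_swap (φ z)]
  ring

theorem canonicalCorrection_phi (hφ2 : ∀ x : V, φ (φ x) = -x + η x • ξ)
    (hηφ : ∀ x : V, η (φ x) = 0)
    (hF2 : ∀ x y z : V, F x y z = F x (φ y) (φ z) + η y * F x ξ z + η z * F x y ξ) (x y z : V) :
    canonicalCorrection φ ξ η F x y (φ z) = canonicalCorrection φ ξ η F x (φ y) z := by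
  simp only [canonicalCorrection, phi_phi_phi hφ2 hηφ, nijenhuisForm_neg_left,
    nijenhuisForm_neg_middle, nijenhuisForm_move_phi hφ2 hηφ hF2 z y]

theorem IsNaturalPotential.sub_mul {Q P : V → V → V → ℝ} (hQ : IsNaturalPotential φ F Q)
    (hPφ : ∀ x y z : V, P x y (φ z) = P x (φ y) z) (hP : ∀ x y z : V, P x y z = -P x z y)
    (c : ℝ) : IsNaturalPotential φ F (fun x y z => Q x y z - c * P x y z) := by
  refine ⟨fun x y z => ?_, fun x y z => ?_⟩
  · linear_combination hQ.1 x y z - c * hPφ x y z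
  · linear_combination hQ.2 x y z - c * hP x y z

end AlmostContact

open AlmostContact in
theorem stmt15_general (V : Type*) [AddCommGroup V] [Module ℝ V]
    (φ : V →ₗ[ℝ] V) (ξ : V) (η : V →ₗ[ℝ] ℝ)
    (hφξ : φ ξ = 0) (hφ2 : ∀ x : V, φ (φ x) = -x + η x • ξ)
    (hηφ : ∀ x : V, η (φ x) = 0) (hηξ : η ξ = 1)
    (F : V →ₗ[ℝ] V →ₗ[ℝ] V →ₗ[ℝ] ℝ)
    (hF1 : ∀ x y z : V, F x y z = F x z y)
    (hF2 : ∀ x y z : V, F x y z = F x (φ y) (φ z) + η y * F x ξ z + η z * F x y ξ)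
    (Q0 : V → V → V → ℝ)
    (hQ0 : ∀ x y z : V, Q0 x y z =
      (1 / 2) * (F x (φ y) z + η z * F x (φ y) ξ - 2 * η y * F x (φ z) ξ))
    (N : V → V → V → ℝ)
    (hN : ∀ x y z : V, N x y z = F (φ x) y z - F x y (φ z) + F x (φ y) ξ * η z
          - F (φ y) x z + F y x (φ z) - F y (φ x) ξ * η z)
    (Q' : V → V → V → ℝ)
    (hQ' : ∀ x y z : V, Q' x y z = Q0 x y z
      - (1 / 8) * (N (φ (φ z)) (φ (φ y)) (φ (φ x)) + 2 * N (φ z) (φ y) ξ * η x)) :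
    (∀ x y z : V, Q' x y (φ z) - Q' x (φ y) z = F x y z) ∧
    (∀ x y z : V, Q' x y z = - Q' x z y) := by
  obtain rfl : Q0 = phiBPotential φ ξ η F := funext₃ hQ0
  obtain rfl : N = nijenhuisForm φ ξ η F := funext₃ hN
  obtain rfl : Q' = fun x y z => phiBPotential φ ξ η F x y z
      - (1 / 8) * canonicalCorrection φ ξ η F x y z := funext₃ hQ'
  exact (phiBPotential_isNaturalPotential hφξ hφ2 hηφ hηξ hF1 hF2).sub_mul
    (canonicalCorrection_phi hφ2 hηφ hF2) canonicalCorrection_swap (1 / 8)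

theorem stmt15 (V : Type*) [AddCommGroup V] [Module ℝ V]
    (φ : V →ₗ[ℝ] V) (ξ : V) (η : V →ₗ[ℝ] ℝ)
    (hφξ : φ ξ = 0) (hφ2 : ∀ x : V, φ (φ x) = -x + η x • ξ)
    (hηφ : ∀ x : V, η (φ x) = 0) (hηξ : η ξ = 1)
    (g : V →ₗ[ℝ] V →ₗ[ℝ] ℝ) (hsym : ∀ x y : V, g x y = g y x)
    (hB : ∀ x y : V, g (φ x) (φ y) = - g x y + η x * η y)
    (F : V →ₗ[ℝ] V →ₗ[ℝ] V →ₗ[ℝ] ℝ)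
    (hF1 : ∀ x y z : V, F x y z = F x z y)
    (hF2 : ∀ x y z : V, F x y z = F x (φ y) (φ z) + η y * F x ξ z + η z * F x y ξ)
    (Q0 : V → V → V → ℝ)
    (hQ0 : ∀ x y z : V, Q0 x y z =
      (1 / 2) * (F x (φ y) z + η z * F x (φ y) ξ - 2 * η y * F x (φ z) ξ))
    (N : V → V → V → ℝ)
    (hN : ∀ x y z : V, N x y z = F (φ x) y z - F x y (φ z) + F x (φ y) ξ * η z
          - F (φ y) x z + F y x (φ z) - F y (φ x) ξ * η z)
    (Q' : V → V → V → ℝ)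
    (hQ' : ∀ x y z : V, Q' x y z = Q0 x y z
      - (1 / 8) * (N (φ (φ z)) (φ (φ y)) (φ (φ x)) + 2 * N (φ z) (φ y) ξ * η x)) :
    (∀ x y z : V, Q' x y (φ z) - Q' x (φ y) z = F x y z) ∧
    (∀ x y z : V, Q' x y z = - Q' x z y) :=
  stmt15_general V φ ξ η hφξ hφ2 hηφ hηξ F hF1 hF2 Q0 hQ0 N hN Q' hQ'
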